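/- Let σ₀ > 0 and let F be a function holomorphic on an open set containing the closed half-plane {s : Re s ≥ σ₀}, such that for every ε > 0 there is a constant C_ε with |F(s)| ≤ C_ε·τ^{λ(σ)+ε} for all s = σ+it with σ ≥ σ₀. Then for every ε > 0 there is a constant C'_ε with |F'(s)| ≤ C'_ε·τ^{λ(σ)+ε} for all s = σ+it with σ ≥ σ₀ + 1/25. -/

import Mathlib

open Complex Filter Topology
open scoped Classical

noncomputable section

namespace Paper

/-- `τ(t) = |t| + 10`. -/
def tau (t : ℝ) : ℝ := |t| + 10

/-- `λ(σ) = max {0, 1/2 - σ}`. -/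
def lam (σ : ℝ) : ℝ := max 0 (1 / 2 - σ)

/-- The analytically continued Dirichlet L-function of `χ`. -/
abbrev L {q : ℕ} [NeZero q] (χ : DirichletCharacter ℂ q) : ℂ → ℂ :=
  DirichletCharacter.LFunction χ

/-- Hypothesis `LH[χ]` (Lindelöf hypothesis for `L(s,χ)`). -/
def LH {q : ℕ} [NeZero q] (χ : DirichletCharacter ℂ q) : Prop :=
  ∀ ε : ℝ, 0 < ε → ∃ C : ℝ, 0 < C ∧ ∀ t : ℝ,
    ‖L χ (1 / 2 + t * Complex.I)‖ ≤ C * tau t ^ ε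

/-- Hypothesis `LH[⋆]`: `LH[χ]` for all Dirichlet characters `χ`. -/
def LHstar : Prop := ∀ (q : ℕ) [NeZero q] (χ : DirichletCharacter ℂ q), LH χ

/-- Hypothesis `RH_sim[χ]`: simple zeros of `L(s,χ)` with positive real part lie on the
critical line. -/
def RHsim {q : ℕ} [NeZero q] (χ : DirichletCharacter ℂ q) : Prop :=
  ∀ ρ : ℂ, L χ ρ = 0 → deriv (L χ) ρ ≠ 0 → 0 < ρ.re → ρ.re = 1 / 2

/-- Hypothesis `RH_sim[⋆]`: `RH_sim[χ]` for all Dirichlet characters `χ`. -/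
def RHsimStar : Prop := ∀ (q : ℕ) [NeZero q] (χ : DirichletCharacter ℂ q), RHsim χ

/-- The Gauss sum `τ(χ) = ∑_{a mod q} χ(a) e(a/q)`. -/
def gaussS {q : ℕ} [NeZero q] (χ : DirichletCharacter ℂ q) : ℂ :=
  ∑ a : ZMod q, χ a * Complex.exp (2 * Real.pi * Complex.I * ((a.val : ℂ) / (q : ℂ)))

/-- `κ = 0` if `χ(-1) = 1`, and `κ = 1` otherwise. -/
def kappa {q : ℕ} (χ : DirichletCharacter ℂ q) : ℕ := if χ (-1) = 1 then 0 else 1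

/-- The factor `M_χ(s)` from the asymmetric functional equation. -/
def Mfun {q : ℕ} [NeZero q] (χ : DirichletCharacter ℂ q) (s : ℂ) : ℂ :=
  gaussS χ / (Complex.I ^ kappa χ * (Real.sqrt q : ℂ)) * (2 : ℂ) ^ s *
    (Real.pi : ℂ) ^ (s - 1) * (q : ℂ) ^ ((1 : ℂ) / 2 - s) *
    Complex.Gamma (1 - s) * Complex.sin (Real.pi * (s + (kappa χ : ℂ)) / 2)

/-- The conjugate Dirichlet character. -/
def conjChar {q : ℕ} (χ : DirichletCharacter ℂ q) : DirichletCharacter ℂ q :=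
  χ.ringHomComp (starRingEnd ℂ)

/-- `ℓ = Λ * log` (Dirichlet convolution). -/
def ell : ℕ → ℝ := ⇑(ArithmeticFunction.vonMangoldt * ArithmeticFunction.log)

/-- The Stieltjes constants; `stieltjes 0` is the Euler–Mascheroni constant `γ₀`. -/
def stieltjes (n : ℕ) : ℝ :=
  limUnder atTop (fun x : ℝ =>
    (∑ k ∈ Finset.Icc 1 ⌊x⌋₊, Real.log k ^ n / k) - Real.log x ^ (n + 1) / (n + 1))

/-- `g_q(s) = ∏_{p ∣ q} (1 - p^{-s})`. -/
def gq (q : ℕ) (s : ℝ) : ℝ := ∏ p ∈ q.primeFactors, (1 - (p : ℝ) ^ (-s))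

/-- The polynomial-type function `P_q(X)`. -/
def Pq (q : ℕ) (X : ℝ) : ℝ :=
  1 / 2 * gq q 1 * X * Real.log X ^ 2 - (1 + stieltjes 0) * gq q 1 * X * Real.log X +
    ((1 + stieltjes 0 + stieltjes 0 ^ 2 + 3 * stieltjes 1) * gq q 1
      - stieltjes 0 * deriv (gq q) 1 - 1 / 2 * deriv (deriv (gq q)) 1) * X

/-- A smooth compactly supported function on `(0,∞)`. -/
def IsBump (B : ℝ → ℝ) : Prop :=
  ContDiff ℝ (⊤ : ℕ∞) B ∧ HasCompactSupport B ∧ tsupport B ⊆ Set.Ioi 0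

/-- `F_{𝔮,k}(X) = ∫_0^∞ B(u/(𝔮X)) P'_{𝔮k}(u) du`. -/
def Ffun (𝔮 k : ℕ) (B : ℝ → ℝ) (X : ℝ) : ℝ :=
  ∫ u in Set.Ioi (0 : ℝ), B (u / (𝔮 * X)) * deriv (Pq (𝔮 * k)) u

/-- The constant `C_{𝔛,ξ}` for `ξ = h/k`. -/
def Cconst {𝔮 : ℕ} (𝔛 : DirichletCharacter ℂ 𝔮) (h k : ℕ) : ℂ :=
  if Nat.gcd h (𝔮 * k) = 1 then
    conjChar 𝔛 (h : ZMod 𝔮) * 𝔛 (k : ZMod 𝔮) * (ArithmeticFunction.moebius k : ℂ) /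
      (Nat.totient (𝔮 * k) : ℂ)
  else 0

/-- Hypothesis `RH_sim†[𝔛]` for a primitive character `𝔛` mod `𝔮`. -/
def RHsimDagger {𝔮 : ℕ} [NeZero 𝔮] (𝔛 : DirichletCharacter ℂ 𝔮) : Prop :=
  RHsim 𝔛 ∧
  ∀ (h k : ℕ) (_ : 0 < h) (hk : 0 < k) (_ : Nat.Coprime h k) (B : ℝ → ℝ) (_ : IsBump B)
    (ε : ℝ) (_ : 0 < ε),
    haveI : NeZero (𝔮 * k) := ⟨Nat.mul_ne_zero (NeZero.ne 𝔮) hk.ne'⟩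
    ∃ C : ℝ, 0 < C ∧ ∀ X : ℝ, 10 ≤ X →
      ‖(
        (∑ᶠ (γ : ℝ) (_ : 0 < γ ∧ L 𝔛 (1 / 2 + γ * Complex.I) = 0 ∧
            deriv (L 𝔛) (1 / 2 + γ * Complex.I) ≠ 0),
          ((h : ℂ) / k) ^ (-(1 / 2 + γ * Complex.I)) *
            deriv (L (DirichletCharacter.changeLevel (dvd_mul_right 𝔮 k) 𝔛))
              (1 / 2 + γ * Complex.I) *
            Mfun (conjChar 𝔛) (1 - (1 / 2 + γ * Complex.I)) *
            (B (γ / (2 * Real.pi * ((h : ℝ) / k) * X)) : ℂ))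
        - Cconst 𝔛 h k * (Ffun 𝔮 k B X : ℂ))‖ ≤ C * X ^ ((1 : ℝ) / 2 + ε)

/-- `δ_χ = 1` if `χ` is principal, else `0`. -/
def deltaChi {q : ℕ} (χ : DirichletCharacter ℂ q) : ℝ := if χ = 1 then 1 else 0

/-- `c_q = φ(q)/q`. -/
def cq (q : ℕ) : ℝ := Nat.totient q / q

/-- `L̃(s,χ) = L(s,χ) - δ_χ c_q/(s-1)`. -/
def Ltilde {q : ℕ} [NeZero q] (χ : DirichletCharacter ℂ q) (s : ℂ) : ℂ :=
  L χ s - (deltaChi χ : ℂ) * (cq q : ℂ) / (s - 1)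

/-- `D(s,χ) = L'(s,χ)²/L(s,χ)`. -/
def Dfun {q : ℕ} [NeZero q] (χ : DirichletCharacter ℂ q) (s : ℂ) : ℂ :=
  deriv (L χ) s ^ 2 / L χ s
end Paper

/-- a Lindelöf-type bound for `F` on `{Re s ≥ σ₀}` yields the same bound for
`F'` on `{Re s ≥ σ₀ + 1/25}`. -/
theorem statement_6 (σ₀ : ℝ) (hσ₀ : 0 < σ₀) (F : ℂ → ℂ)
    (hF : ∃ U : Set ℂ, IsOpen U ∧ {s : ℂ | σ₀ ≤ s.re} ⊆ U ∧ DifferentiableOn ℂ F U)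
    (hbd : ∀ ε : ℝ, 0 < ε → ∃ C : ℝ, ∀ s : ℂ, σ₀ ≤ s.re →
      ‖F s‖ ≤ C * Paper.tau s.im ^ (Paper.lam s.re + ε)) :
    ∀ ε : ℝ, 0 < ε → ∃ C' : ℝ, ∀ s : ℂ, σ₀ + 1 / 25 ≤ s.re →
      ‖deriv F s‖ ≤ C' * Paper.tau s.im ^ (Paper.lam s.re + ε) := by
  obtain ⟨U, hUopen, hUsub, hFdiff⟩ := hF
  intro ε hε
  obtain ⟨C, hC⟩ := hbd (ε / 2) (by positivity)
  set r : ℝ := min (1 / 25) (ε / 2) with hrdef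
  have hr0 : 0 < r := lt_min (by norm_num) (by positivity)
  have hr25 : r ≤ 1 / 25 := min_le_left _ _
  have hrε : r ≤ ε / 2 := min_le_right _ _
  refine ⟨max C 0 * 2 ^ ((1 : ℝ) / 2 + ε) / r, fun s hs => ?_⟩
  set M : ℝ := max C 0 * 2 ^ ((1 : ℝ) / 2 + ε) * Paper.tau s.im ^ (Paper.lam s.re + ε)
    with hMdef
  have habs : ∀ z : ℂ, z ∈ Metric.closedBall s r →
      |z.re - s.re| ≤ r ∧ |z.im - s.im| ≤ r := by
    intro z hz
    have hd : ‖z - s‖ ≤ r := by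
      simpa [Complex.dist_eq] using Metric.mem_closedBall.mp hz
    exact ⟨le_trans (by simpa using Complex.abs_re_le_norm (z - s)) hd,
      le_trans (by simpa using Complex.abs_im_le_norm (z - s)) hd⟩
  have hball : Metric.closedBall s r ⊆ {z : ℂ | σ₀ ≤ z.re} := by
    intro z hz
    have hre := (habs z hz).1
    have : s.re - z.re ≤ r := by
      rw [abs_sub_comm] at hre
      linarith [le_abs_self (s.re - z.re)]
    simp only [Set.mem_setOf_eq]
    linarith
  have hτs10 : (10 : ℝ) ≤ Paper.tau s.im := by
    simp only [Paper.tau]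
    linarith [abs_nonneg s.im]
  have hlam0 : (0 : ℝ) ≤ Paper.lam s.re := le_max_left _ _
  have hlamhalf : Paper.lam s.re ≤ 1 / 2 := by
    apply max_le (by norm_num)
    linarith [hs, hσ₀]
  have hexp0 : (0 : ℝ) ≤ Paper.lam s.re + ε := by linarith
  have hτspos : (0 : ℝ) < Paper.tau s.im := by linarith
  have hMτpos : (0 : ℝ) < Paper.tau s.im ^ (Paper.lam s.re + ε) := Real.rpow_pos_of_pos hτspos _
  -- bound F on the sphere
  have key : ∀ z ∈ Metric.sphere s r, ‖F z‖ ≤ M := by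
    intro z hz
    have hzcb : z ∈ Metric.closedBall s r := Metric.sphere_subset_closedBall hz
    obtain ⟨hre, him⟩ := habs z hzcb
    have hzre : σ₀ ≤ z.re := hball hzcb
    have hτz10 : (10 : ℝ) ≤ Paper.tau z.im := by simp only [Paper.tau]; linarith [abs_nonneg z.im]
    have hτz1 : (1 : ℝ) ≤ Paper.tau z.im := by linarith
    have hτz : Paper.tau z.im ≤ 2 * Paper.tau s.im := by
      have h1 : |z.im| ≤ |s.im| + r := by
        have := abs_sub_abs_le_abs_sub z.im s.im
        linarith
      simp only [Paper.tau] at *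
      linarith
    have hlamz : Paper.lam z.re + ε / 2 ≤ Paper.lam s.re + ε := by
      have h1 : Paper.lam z.re ≤ Paper.lam s.re + r := by
        apply max_le
        · linarith
        · have : s.re - z.re ≤ r := by
            rw [abs_sub_comm] at hre
            linarith [le_abs_self (s.re - z.re)]
          have h2 : (1 : ℝ) / 2 - s.re ≤ Paper.lam s.re := le_max_right _ _
          linarith
      linarith
    have hb := hC z hzre
    have hτzpow : (0 : ℝ) < Paper.tau z.im ^ (Paper.lam z.re + ε / 2) :=
      Real.rpow_pos_of_pos (by linarith) _
    calc ‖F z‖ = ‖F z‖ := rfl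
      _ ≤ C * Paper.tau z.im ^ (Paper.lam z.re + ε / 2) := hb
      _ ≤ max C 0 * Paper.tau z.im ^ (Paper.lam z.re + ε / 2) :=
          mul_le_mul_of_nonneg_right (le_max_left _ _) hτzpow.le
      _ ≤ max C 0 * Paper.tau z.im ^ (Paper.lam s.re + ε) := by
          apply mul_le_mul_of_nonneg_left _ (le_max_right _ _)
          exact Real.rpow_le_rpow_of_exponent_le hτz1 hlamz
      _ ≤ max C 0 * (2 * Paper.tau s.im) ^ (Paper.lam s.re + ε) := by
          apply mul_le_mul_of_nonneg_left _ (le_max_right _ _)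
          exact Real.rpow_le_rpow (by linarith) hτz hexp0
      _ = max C 0 * ((2 : ℝ) ^ (Paper.lam s.re + ε) *
            Paper.tau s.im ^ (Paper.lam s.re + ε)) := by
          rw [Real.mul_rpow (by norm_num) hτspos.le]
      _ ≤ max C 0 * ((2 : ℝ) ^ ((1 : ℝ) / 2 + ε) *
            Paper.tau s.im ^ (Paper.lam s.re + ε)) := by
          apply mul_le_mul_of_nonneg_left _ (le_max_right _ _)
          apply mul_le_mul_of_nonneg_right _ hMτpos.le
          exact Real.rpow_le_rpow_of_exponent_le (by norm_num) (by linarith)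
      _ = M := by rw [hMdef]; ring
  -- Cauchy estimate
  have hdc : DiffContOnCl ℂ F (Metric.ball s r) := by
    apply DifferentiableOn.diffContOnCl
    rw [closure_ball s hr0.ne']
    exact hFdiff.mono (le_trans hball hUsub)
  have := Complex.norm_deriv_le_of_forall_mem_sphere_norm_le hr0 hdc key
  calc ‖deriv F s‖ = ‖deriv F s‖ := rfl
    _ ≤ M / r := this
    _ = max C 0 * 2 ^ ((1 : ℝ) / 2 + ε) / r * Paper.tau s.im ^ (Paper.lam s.re + ε) := by
        rw [hMdef]; ring
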